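/- arXiv:2202.12545 — 7 statements merged into one kernel-verified Lean document; each statement's English description precedes it below -/
import Mathlib

section
/- Let T > 0 and let y : [0,T] → ℝ satisfy y(t) = y(0) + ∫₀ᵗ G(s) ds for all t ∈ [0,T], where G : [0,T] → ℝ is Lebesgue integrable. Define z(t) := sup_{s ∈ [0,t]} y(s). Then z(T) = sup_{t ∈ [0,T]} y(t), and there exists a measurable function v : [0,T] → {0,1} such that z(t) = y(0) + ∫₀ᵗ max(G(s),0)·(1 − v(s)) ds for all t ∈ [0,T]. -/
/-!
The running maximum `M t = sup_{[a, t]} f` of an absolutely continuous `f` is again absolutely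
continuous: on `[p, q]` it rises by at most `f r - f p`, where `r` maximises `f` on `[p, q]`,
and the intervals `[p, r]` are no longer than the `[p, q]`. So `M` is the integral of its a.e.
derivative. Where `f < M`, the function `M` has a local maximum, so `M' = 0`; where `f = M`, the
function `f - M` has a local maximum, so `M' = f'`, which is nonnegative because `M` is monotone.
Hence `M' = max (f', 0)` on the record set `{M ≤ f}` and `0` off it, and `v` is the indicator of
the complement of the record set.
-/

open MeasureTheory Set Filter Topology

theorem AbsolutelyContinuousOnInterval.of_dist_le {X Y : Type*} [PseudoMetricSpace X]
    [PseudoMetricSpace Y] {f : ℝ → X} {g : ℝ → Y} {a b : ℝ}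
    (hf : AbsolutelyContinuousOnInterval f a b)
    (h : ∀ p ∈ uIcc a b, ∀ q ∈ uIcc a b, p ≤ q →
      ∃ r ∈ Icc p q, dist (g p) (g q) ≤ dist (f p) (f r)) :
    AbsolutelyContinuousOnInterval g a b := by
  rw [absolutelyContinuousOnInterval_iff] at hf ⊢
  intro ε hε
  obtain ⟨δ, hδ, hfδ⟩ := hf ε hε
  refine ⟨δ, hδ, fun ⟨n, I⟩ ⟨hImem, hIdisj⟩ hlen => ?_⟩
  choose! R hR using h
  set J : ℕ → ℝ × ℝ := fun i =>
    (min (I i).1 (I i).2, R (min (I i).1 (I i).2) (max (I i).1 (I i).2))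
  have hJ : ∀ i ∈ Finset.range n,
      ((J i).1 ∈ uIcc a b ∧ (J i).2 ∈ uIcc a b) ∧ uIoc (J i).1 (J i).2 ⊆ uIoc (I i).1 (I i).2 ∧
      dist (J i).1 (J i).2 ≤ dist (I i).1 (I i).2 ∧
      dist (g (I i).1) (g (I i).2) ≤ dist (f (J i).1) (f (J i).2) := by
    intro i hi
    obtain ⟨h1, h2⟩ := hImem i hi
    have hlo : min (I i).1 (I i).2 ∈ uIcc a b := by
      rcases le_total (I i).1 (I i).2 with hle | hle <;> simp [hle, h1, h2]
    have hhi : max (I i).1 (I i).2 ∈ uIcc a b := by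
      rcases le_total (I i).1 (I i).2 with hle | hle <;> simp [hle, h1, h2]
    obtain ⟨hRmem, hRdist⟩ := hR _ hlo _ hhi min_le_max
    refine ⟨⟨hlo, uIcc_subset_uIcc hlo hhi (Icc_subset_uIcc hRmem)⟩, ?_, ?_, ?_⟩
    · rw [uIoc_of_le hRmem.1, uIoc]
      exact Ioc_subset_Ioc_right hRmem.2
    · rw [Real.dist_eq, Real.dist_eq, abs_sub_comm, abs_of_nonneg (by linarith [hRmem.1]),
        ← max_sub_min_eq_abs']
      linarith [hRmem.2]
    · refine le_trans (le_of_eq ?_) hRdist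
      rcases le_total (I i).1 (I i).2 with hle | hle <;> simp [hle, dist_comm]
  calc ∑ i ∈ Finset.range n, dist (g (I i).1) (g (I i).2)
      ≤ ∑ i ∈ Finset.range n, dist (f (J i).1) (f (J i).2) :=
        Finset.sum_le_sum fun i hi => (hJ i hi).2.2.2
    _ < ε := by
      refine hfδ (n, J) ⟨fun i hi => (hJ i hi).1, ?_⟩
        ((Finset.sum_le_sum fun i hi => (hJ i hi).2.2.1).trans_lt hlen)
      exact hIdisj.mono_on fun i hi => (hJ i hi).2.1

-- For `t < a` this is the junk value `sSup ∅ = 0`; only `t ∈ [a, b]` is ever used.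
noncomputable def runningMax (f : ℝ → ℝ) (a t : ℝ) : ℝ := sSup (f '' Icc a t)

section runningMax

variable {f : ℝ → ℝ} {a b : ℝ}

theorem runningMax_self : runningMax f a a = f a := by
  simp [runningMax]

theorem le_runningMax (hf : ContinuousOn f (Icc a b)) {t u : ℝ} (ht : t ≤ b) (hu : u ∈ Icc a t) :
    f u ≤ runningMax f a t :=
  le_csSup ((isCompact_Icc.image_of_continuousOn (hf.mono (Icc_subset_Icc_right ht))).bddAbove)
    (mem_image_of_mem f hu)

theorem runningMax_le {t c : ℝ} (ht : a ≤ t) (h : ∀ u ∈ Icc a t, f u ≤ c) :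
    runningMax f a t ≤ c :=
  csSup_le ((nonempty_Icc.2 ht).image f) (forall_mem_image.2 h)

theorem monotoneOn_runningMax (hf : ContinuousOn f (Icc a b)) :
    MonotoneOn (runningMax f a) (Icc a b) := fun _ hp _ hq hpq =>
  runningMax_le hp.1 fun _ hu => le_runningMax hf hq.2 ⟨hu.1, hu.2.trans hpq⟩

theorem exists_runningMax_sub_le (hf : ContinuousOn f (Icc a b)) {p q : ℝ} (hp : a ≤ p)
    (hpq : p ≤ q) (hq : q ≤ b) :
    ∃ r ∈ Icc p q, runningMax f a q - runningMax f a p ≤ f r - f p := by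
  obtain ⟨r, hr, hrmax⟩ := isCompact_Icc.exists_isMaxOn (nonempty_Icc.2 hpq)
    (hf.mono (Icc_subset_Icc hp hq))
  refine ⟨r, hr, ?_⟩
  have hfp : f p ≤ runningMax f a p := le_runningMax hf (hpq.trans hq) ⟨hp, le_rfl⟩
  have hfr : f p ≤ f r := hrmax ⟨le_rfl, hpq⟩
  have hq_le : runningMax f a q ≤ max (runningMax f a p) (f r) := by
    refine runningMax_le (hp.trans hpq) fun u hu => ?_
    rcases le_total u p with hup | hpu
    · exact le_max_of_le_left (le_runningMax hf (hpq.trans hq) ⟨hu.1, hup⟩)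
    · exact le_max_of_le_right (hrmax ⟨hpu, hu.2⟩)
  rcases le_total (runningMax f a p) (f r) with h | h
  · rw [max_eq_right h] at hq_le; linarith
  · rw [max_eq_left h] at hq_le; linarith

theorem AbsolutelyContinuousOnInterval.runningMax (hab : a ≤ b)
    (hf : AbsolutelyContinuousOnInterval f a b) :
    AbsolutelyContinuousOnInterval (runningMax f a) a b := by
  have hfc : ContinuousOn f (Icc a b) := uIcc_of_le hab ▸ hf.continuousOn
  refine hf.of_dist_le fun p hp q hq hpq => ?_
  rw [uIcc_of_le hab] at hp hq
  obtain ⟨r, hr, hle⟩ := exists_runningMax_sub_le hfc hp.1 hpq hq.2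
  refine ⟨r, hr, ?_⟩
  rw [dist_comm, Real.dist_eq, abs_of_nonneg (sub_nonneg.2 (monotoneOn_runningMax hfc hp hq hpq)),
    dist_comm, Real.dist_eq]
  exact hle.trans (le_abs_self _)

theorem isLocalMax_runningMax_of_lt (hf : ContinuousOn f (Icc a b)) {x : ℝ} (hx : x ∈ Ioo a b)
    (hlt : f x < runningMax f a x) : IsLocalMax (runningMax f a) x := by
  have hnhds : Ioo a b ∩ {u | f u < runningMax f a x} ∈ 𝓝 x :=
    inter_mem (Ioo_mem_nhds hx.1 hx.2)
      ((hf.continuousAt (Icc_mem_nhds hx.1 hx.2)).eventually (gt_mem_nhds hlt))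
  obtain ⟨l, r, hxlr, hlr⟩ := mem_nhds_iff_exists_Ioo_subset.1 hnhds
  filter_upwards [Ioo_mem_nhds hxlr.1 hxlr.2] with u hu
  have hub : u ∈ Icc a b := Ioo_subset_Icc_self (hlr hu).1
  rcases le_total u x with hux | hxu
  · exact monotoneOn_runningMax hf hub (Ioo_subset_Icc_self hx) hux
  refine runningMax_le hub.1 fun w hw => ?_
  rcases le_total w x with hwx | hxw
  · exact le_runningMax hf hx.2.le ⟨hw.1, hwx⟩
  · exact (hlr ⟨hxlr.1.trans_le hxw, hw.2.trans_lt hu.2⟩).2.le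

theorem eq_of_hasDerivAt_runningMax_of_le (hf : ContinuousOn f (Icc a b)) {x f' m : ℝ}
    (hx : x ∈ Ioo a b) (hfx : HasDerivAt f f' x) (hM : HasDerivAt (runningMax f a) m x)
    (hle : runningMax f a x ≤ f x) : m = f' := by
  have hmax : IsLocalMax (fun u => f u - runningMax f a u) x := by
    filter_upwards [Ioo_mem_nhds hx.1 hx.2] with u hu
    have := le_runningMax hf hu.2.le ⟨hu.1.le, le_rfl⟩
    linarith
  linarith [hmax.hasDerivAt_eq_zero (hfx.sub hM)]

theorem deriv_runningMax_nonneg (hf : ContinuousOn f (Icc a b)) {x : ℝ} (hx : x ∈ Ioo a b) :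
    0 ≤ deriv (runningMax f a) x := by
  rw [← derivWithin_of_mem_nhds (Icc_mem_nhds hx.1 hx.2)]
  exact (monotoneOn_runningMax hf).derivWithin_nonneg

theorem deriv_runningMax (hf : ContinuousOn f (Icc a b)) {x f' : ℝ} (hx : x ∈ Ioo a b)
    (hfx : HasDerivAt f f' x) (hM : DifferentiableAt ℝ (runningMax f a) x) :
    deriv (runningMax f a) x = if runningMax f a x ≤ f x then max f' 0 else 0 := by
  split_ifs with hle
  · have heq := eq_of_hasDerivAt_runningMax_of_le hf hx hfx hM.hasDerivAt hle
    rw [heq, max_eq_left (heq ▸ deriv_runningMax_nonneg hf hx)]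
  · exact (isLocalMax_runningMax_of_lt hf hx (not_le.1 hle)).deriv_eq_zero

def recordSet (f : ℝ → ℝ) (a b : ℝ) : Set ℝ := {t ∈ Icc a b | runningMax f a t ≤ f t}

theorem isClosed_recordSet (hab : a ≤ b) (hf : AbsolutelyContinuousOnInterval f a b) :
    IsClosed (recordSet f a b) := by
  have hM := (hf.runningMax hab).continuousOn
  rw [uIcc_of_le hab] at hM
  exact isClosed_Icc.isClosed_le hM (uIcc_of_le hab ▸ hf.continuousOn)

theorem runningMax_eq_add_integral (hab : a ≤ b) (hf : AbsolutelyContinuousOnInterval f a b)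
    {f' : ℝ → ℝ} (hf' : ∀ᵐ x, x ∈ Ioo a b → HasDerivAt f (f' x) x) {t : ℝ} (ht : t ∈ Icc a b) :
    runningMax f a t =
      f a + ∫ s in a..t, (recordSet f a b).indicator (fun s => max (f' s) 0) s := by
  have hfc : ContinuousOn f (Icc a b) := uIcc_of_le hab ▸ hf.continuousOn
  have hM : AbsolutelyContinuousOnInterval (runningMax f a) a t :=
    (hf.runningMax hab).mono (uIcc_subset_uIcc left_mem_uIcc (uIcc_of_le hab ▸ ht))
  have hderiv : ∀ᵐ x, x ∈ uIoc a t →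
      deriv (runningMax f a) x = (recordSet f a b).indicator (fun s => max (f' s) 0) x := by
    have hb : ∀ᵐ x : ℝ, x ≠ b := by simp [ae_iff, measure_singleton]
    filter_upwards [hf', (hf.runningMax hab).ae_differentiableAt, hb] with x hfx hMx hxb hx
    rw [uIoc_of_le ht.1] at hx
    have hxab : x ∈ Ioo a b := ⟨hx.1, lt_of_le_of_ne (hx.2.trans ht.2) hxb⟩
    rw [deriv_runningMax hfc hxab (hfx hxab) (hMx (uIcc_of_le hab ▸ Ioo_subset_Icc_self hxab))]
    simp [recordSet, indicator_apply, hxab.1.le, hxab.2.le]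
  rw [← intervalIntegral.integral_congr_ae hderiv, hM.integral_deriv_eq_sub, runningMax_self]
  ring

end runningMax

section integral

variable {y G : ℝ → ℝ} {a b : ℝ}

theorem absolutelyContinuousOnInterval_of_eq_add_integral (hab : a ≤ b)
    (hG : IntegrableOn G (Icc a b)) (hy : ∀ t ∈ Icc a b, y t = y a + ∫ s in a..t, G s) :
    AbsolutelyContinuousOnInterval y a b := by
  have hGi : IntervalIntegrable G volume a b := (uIcc_of_le hab ▸ hG).intervalIntegrable
  refine (hGi.absolutelyContinuousOnInterval_intervalIntegral left_mem_uIcc).of_dist_le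
    fun p hp q hq hpq => ⟨q, right_mem_Icc.2 hpq, ?_⟩
  rw [uIcc_of_le hab] at hp hq
  rw [hy p hp, hy q hq, dist_add_left]

theorem ae_hasDerivAt_of_eq_add_integral (hab : a ≤ b)
    (hG : IntegrableOn G (Icc a b)) (hy : ∀ t ∈ Icc a b, y t = y a + ∫ s in a..t, G s) :
    ∀ᵐ x, x ∈ Ioo a b → HasDerivAt y (G x) x := by
  have hGi : IntervalIntegrable G volume a b := (uIcc_of_le hab ▸ hG).intervalIntegrable
  filter_upwards [hGi.ae_hasDerivAt_integral] with x hx hxab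
  refine ((hx (uIcc_of_le hab ▸ Ioo_subset_Icc_self hxab) a left_mem_uIcc).const_add
    (y a)).congr_of_eventuallyEq ?_
  filter_upwards [Icc_mem_nhds hxab.1 hxab.2] with t ht using hy t ht

end integral

/-- the running maximum `z` of an absolutely continuous function
`y(t) = y(0) + ∫₀ᵗ G(s) ds` satisfies `z(T) = sup_{[0,T]} y` and can be generated
by the dynamics `ż = max(G,0)(1-v)` for a measurable bang-bang control `v` with
values in `{0,1}`. -/
theorem stmt0 (T : ℝ) (hT : 0 < T) (G : ℝ → ℝ) (hG : IntegrableOn G (Icc 0 T))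
    (y : ℝ → ℝ) (hy : ∀ t ∈ Icc 0 T, y t = y 0 + ∫ s in (0:ℝ)..t, G s)
    (z : ℝ → ℝ) (hz : ∀ t ∈ Icc 0 T, z t = sSup (y '' Icc 0 t)) :
    z T = sSup (y '' Icc 0 T) ∧
    ∃ v : ℝ → ℝ, Measurable v ∧ (∀ t, v t ∈ ({0, 1} : Set ℝ)) ∧
      ∀ t ∈ Icc 0 T, z t = y 0 + ∫ s in (0:ℝ)..t, max (G s) 0 * (1 - v s) := by
  have hyac := absolutelyContinuousOnInterval_of_eq_add_integral hT.le hG hy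
  refine ⟨hz T (right_mem_Icc.2 hT.le), (recordSet y 0 T)ᶜ.indicator 1,
    measurable_const.indicator (isClosed_recordSet hT.le hyac).measurableSet.compl,
    fun t => ?_, fun t ht => ?_⟩
  · by_cases h : t ∈ recordSet y 0 T <;> simp [h]
  · rw [hz t ht, ← runningMax, runningMax_eq_add_integral hT.le hyac
      (ae_hasDerivAt_of_eq_add_integral hT.le hG hy) ht]
    congr 1
    refine intervalIntegral.integral_congr fun s _ => ?_
    by_cases h : s ∈ recordSet y 0 T <;> simp [h]
end

section
/- Let T > 0 and let y, z : [0,T] → ℝ satisfy y(t) = y(0) + ∫₀ᵗ G(s) ds and z(t) = z(0) + ∫₀ᵗ H(s) ds for all t ∈ [0,T], where G, H : [0,T] → ℝ are Lebesgue integrable. Assume z(0) ≥ y(0) and H(t) ≥ G(t) for almost every t ∈ [0,T] such that z(t) < y(t). Then z(t) ≥ y(t) for all t ∈ [0,T]. -/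
/-!
Put `φ = z - y` and `f = H - G`, so that `φ = φ 0 + ∫₀ᵗ f` is continuous. If `φ t < 0`, let `σ` be
the last point of `[0, t]` with `φ σ ≥ 0`. On `(σ, t]` we have `φ < 0`, hence `f ≥ 0` a.e., so
`φ t = φ σ + ∫_σ^t f ≥ φ σ ≥ 0`, a contradiction.
-/

open MeasureTheory Set

theorem ContinuousOn.exists_nonneg_forall_neg_Ioc {φ : ℝ → ℝ} {a b : ℝ} (hab : a ≤ b)
    (hφ : ContinuousOn φ (Icc a b)) (ha : 0 ≤ φ a) (hb : φ b < 0) :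
    ∃ σ ∈ Ico a b, 0 ≤ φ σ ∧ ∀ t ∈ Ioc σ b, φ t < 0 := by
  have hS : IsCompact (Icc a b ∩ φ ⁻¹' Ici 0) :=
    isCompact_Icc.of_isClosed_subset
      (hφ.preimage_isClosed_of_isClosed isClosed_Icc isClosed_Ici) inter_subset_left
  obtain ⟨σ, ⟨hσ, hφσ⟩, hmax⟩ := hS.exists_isGreatest ⟨a, left_mem_Icc.2 hab, ha⟩
  have hσb : σ ≠ b := by rintro rfl; exact (not_le.2 hb) hφσ
  refine ⟨σ, ⟨hσ.1, hσ.2.lt_of_ne hσb⟩, hφσ, fun t ht => ?_⟩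
  by_contra! hφt
  exact (hmax ⟨⟨hσ.1.trans ht.1.le, ht.2⟩, hφt⟩).not_gt ht.1

theorem continuousOn_of_eq_add_integral {f φ : ℝ → ℝ} {a b : ℝ} (hab : a ≤ b)
    (hf : IntegrableOn f (Icc a b)) (hφ : ∀ t ∈ Icc a b, φ t = φ a + ∫ s in a..t, f s) :
    ContinuousOn φ (Icc a b) := by
  have hprim := intervalIntegral.continuousOn_primitive_interval (μ := volume)
    (show IntegrableOn f (uIcc a b) by rwa [uIcc_of_le hab])
  rw [uIcc_of_le hab] at hprim
  exact (continuousOn_const.add hprim).congr hφ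

theorem nonneg_of_eq_add_integral {f φ : ℝ → ℝ} {a b : ℝ} (hf : IntegrableOn f (Icc a b))
    (hφ : ∀ t ∈ Icc a b, φ t = φ a + ∫ s in a..t, f s) (ha : 0 ≤ φ a)
    (hpos : ∀ᵐ t ∂volume.restrict (Icc a b), φ t < 0 → 0 ≤ f t) :
    ∀ t ∈ Icc a b, 0 ≤ φ t := by
  intro t ht
  by_contra! hneg
  have hab : a ≤ b := ht.1.trans ht.2
  have hcont := continuousOn_of_eq_add_integral hab hf hφ
  have hsub : Icc a t ⊆ Icc a b := Icc_subset_Icc_right ht.2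
  obtain ⟨σ, hσ, hφσ, hneg_after⟩ :=
    (hcont.mono hsub).exists_nonneg_forall_neg_Ioc ht.1 ha hneg
  have hσ_mem : σ ∈ Icc a b := hsub (Ico_subset_Icc_self hσ)
  have hint : IntervalIntegrable f volume a t :=
    (hf.mono_set (uIcc_subset_Icc (left_mem_Icc.2 hab) ht)).intervalIntegrable
  have hint' : IntervalIntegrable f volume a σ :=
    (hf.mono_set (uIcc_subset_Icc (left_mem_Icc.2 hab) hσ_mem)).intervalIntegrable
  have hf_nonneg : 0 ≤ ∫ s in σ..t, f s := by
    rw [intervalIntegral.integral_of_le hσ.2.le]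
    refine setIntegral_nonneg_of_ae_restrict ?_
    have hIoc : Ioc σ t ⊆ Icc a b := fun s hs => ⟨hσ_mem.1.trans hs.1.le, hs.2.trans ht.2⟩
    filter_upwards [ae_restrict_of_ae_restrict_of_subset hIoc hpos,
      ae_restrict_mem measurableSet_Ioc] with s hs hs_mem using hs (hneg_after s hs_mem)
  have hincr : φ t - φ σ = ∫ s in σ..t, f s := by
    rw [hφ t ht, hφ σ hσ_mem, add_sub_add_left_eq_sub,
      intervalIntegral.integral_interval_sub_left hint hint']
  linarith

theorem stmt1_general (T : ℝ) (G H : ℝ → ℝ)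
    (hG : IntegrableOn G (Icc 0 T)) (hH : IntegrableOn H (Icc 0 T))
    (y z : ℝ → ℝ)
    (hy : ∀ t ∈ Icc 0 T, y t = y 0 + ∫ s in (0:ℝ)..t, G s)
    (hz : ∀ t ∈ Icc 0 T, z t = z 0 + ∫ s in (0:ℝ)..t, H s)
    (h0 : z 0 ≥ y 0)
    (hdom : ∀ᵐ t ∂(volume.restrict (Icc 0 T)), z t < y t → H t ≥ G t) :
    ∀ t ∈ Icc 0 T, z t ≥ y t := by
  have hdiff : ∀ t ∈ Icc 0 T, (z - y) t = (z - y) 0 + ∫ s in (0:ℝ)..t, (H - G) s := by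
    intro t ht
    have hsub : uIcc 0 t ⊆ Icc 0 T := uIcc_subset_Icc ⟨le_rfl, ht.1.trans ht.2⟩ ht
    simp only [Pi.sub_apply]
    rw [hz t ht, hy t ht, intervalIntegral.integral_sub ((hH.mono_set hsub).intervalIntegrable)
      ((hG.mono_set hsub).intervalIntegrable)]
    ring
  have hnonneg := nonneg_of_eq_add_integral (hH.sub hG) hdiff (sub_nonneg.2 h0)
    (hdom.mono fun t ht hlt => sub_nonneg.2 (ht (sub_neg.1 hlt)))
  exact fun t ht => sub_nonneg.1 (hnonneg t ht)

/-- comparison lemma. If `y(t) = y(0) + ∫₀ᵗ G` and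
`z(t) = z(0) + ∫₀ᵗ H` with `z(0) ≥ y(0)` and `H ≥ G` a.e. on the set where
`z < y`, then `z ≥ y` on `[0,T]`. -/
theorem stmt1 (T : ℝ) (hT : 0 < T) (G H : ℝ → ℝ)
    (hG : IntegrableOn G (Icc 0 T)) (hH : IntegrableOn H (Icc 0 T))
    (y z : ℝ → ℝ)
    (hy : ∀ t ∈ Icc 0 T, y t = y 0 + ∫ s in (0:ℝ)..t, G s)
    (hz : ∀ t ∈ Icc 0 T, z t = z 0 + ∫ s in (0:ℝ)..t, H s)
    (h0 : z 0 ≥ y 0)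
    (hdom : ∀ᵐ t ∂(volume.restrict (Icc 0 T)), z t < y t → H t ≥ G t) :
    ∀ t ∈ Icc 0 T, z t ≥ y t :=
  stmt1_general T G H hG hH y z hy hz h0 hdom
end

section
/- Let T > 0 and let y : [0,T] → ℝ satisfy y(t) = y(0) + ∫₀ᵗ G(s) ds for all t ∈ [0,T], where G : [0,T] → ℝ is Lebesgue integrable. For a measurable function v : [0,T] → [0,1], set z_v(t) := y(0) + ∫₀ᵗ max(G(s),0)·(1 − v(s)) ds, and call v admissible if z_v(t) ≥ y(t) for all t ∈ [0,T]. Then: (i) for every admissible v one has z_v(T) ≥ sup_{t ∈ [0,T]} y(t); (ii) there exists an admissible v taking values in {0,1} with z_v(T) = sup_{t ∈ [0,T]} y(t); consequently the infimum of z_v(T) over admissible v is attained and equals sup_{t ∈ [0,T]} y(t). -/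
/-!
The integrand `max (G s) 0 * (1 - v s)` is nonnegative, so `z_v` is nondecreasing and
`z_v(T) ≥ z_v(t) ≥ y(t)` for every `t`. Conversely, let `c` be a time at which
`y(0) + ∫₀ᶜ G⁺` equals the peak of `y` (intermediate value theorem between `0` and a maximiser
of `y`), and switch `G⁺` off after `c`. Before `c` the state dominates `y` because `G ≤ G⁺`;
after `c` it stays at the peak.
-/

open MeasureTheory Set intervalIntegral

theorem MeasureTheory.IntegrableOn.continuousOn_intervalIntegral {f : ℝ → ℝ} {a b : ℝ}
    (hf : IntegrableOn f (Icc a b)) :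
    ContinuousOn (fun t => ∫ s in a..t, f s) (Icc a b) :=
  (continuousOn_primitive hf).congr fun _ ht => integral_of_le ht.1

theorem csSup_image_le_add_intervalIntegral {y f : ℝ → ℝ} {a b x₀ : ℝ} (hab : a ≤ b)
    (hf : IntegrableOn f (Icc a b)) (hf₀ : ∀ s, 0 ≤ f s)
    (hy : ∀ t ∈ Icc a b, y t ≤ x₀ + ∫ s in a..t, f s) :
    sSup (y '' Icc a b) ≤ x₀ + ∫ s in a..b, f s := by
  refine csSup_le ((nonempty_Icc.2 hab).image y) (forall_mem_image.2 fun t ht => ?_)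
  calc y t ≤ x₀ + ∫ s in a..t, f s := hy t ht
    _ ≤ x₀ + ∫ s in a..b, f s := by
      gcongr
      exact integral_mono_interval le_rfl ht.1 ht.2 (ae_of_all _ hf₀)
        ((intervalIntegrable_iff_integrableOn_Icc_of_le hab).2 hf)

theorem MeasureTheory.IntegrableOn.max_zero_mul_one_sub {G v : ℝ → ℝ} {s : Set ℝ}
    (hG : IntegrableOn G s) (hv : AEStronglyMeasurable v (volume.restrict s))
    (hv₀₁ : ∀ t, v t ∈ Icc (0 : ℝ) 1) :
    IntegrableOn (fun t => max (G t) 0 * (1 - v t)) s :=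
  hG.pos_part.mul_bdd (c := 1) (aestronglyMeasurable_const.sub hv) <| ae_of_all _ fun t => by
    rw [Real.norm_eq_abs, abs_le]
    constructor <;> linarith [(hv₀₁ t).1, (hv₀₁ t).2]

theorem intervalIntegral_le_intervalIntegral_max_zero {G : ℝ → ℝ} {a t : ℝ} (hat : a ≤ t)
    (hG : IntegrableOn G (Icc a t)) :
    ∫ s in a..t, G s ≤ ∫ s in a..t, max (G s) 0 :=
  integral_mono_on hat ((intervalIntegrable_iff_integrableOn_Icc_of_le hat).2 hG)
    ((intervalIntegrable_iff_integrableOn_Icc_of_le hat).2 hG.pos_part) fun _ _ => le_max_left _ _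

theorem intervalIntegral_mul_one_sub_indicator_Ioi {f : ℝ → ℝ} {a c t : ℝ} (hat : a ≤ t)
    (hac : a ≤ c) :
    ∫ s in a..t, f s * (1 - (Ioi c).indicator 1 s) = ∫ s in a..min t c, f s := by
  have hf : (fun s => f s * (1 - (Ioi c).indicator 1 s)) = (Iic c).indicator f := by
    ext s
    by_cases hs : s ≤ c
    · simp [hs]
    · simp [hs, not_le.1 hs]
  rw [hf, integral_of_le hat, setIntegral_indicator measurableSet_Iic, Ioc_inter_Iic,
    integral_of_le (le_min hat hac)]

theorem exists_switchingTime {G y : ℝ → ℝ} {a b : ℝ} (hab : a ≤ b)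
    (hG : IntegrableOn G (Icc a b))
    (hy : ∀ t ∈ Icc a b, y t = y a + ∫ s in a..t, G s) :
    ∃ c ∈ Icc a b, (∀ t ∈ Icc a b, y t ≤ y a + ∫ s in a..min t c, max (G s) 0) ∧
      y a + ∫ s in a..c, max (G s) 0 = sSup (y '' Icc a b) := by
  have hy_cont : ContinuousOn y (Icc a b) :=
    (continuousOn_const.add hG.continuousOn_intervalIntegral).congr hy
  obtain ⟨τ, hτ, hτ_max⟩ := isCompact_Icc.exists_sSup_image_eq (nonempty_Icc.2 hab) hy_cont
  have hbdd : BddAbove (y '' Icc a b) := (isCompact_Icc.image_of_continuousOn hy_cont).bddAbove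
  have hint : ∀ t ∈ Icc a b, IntegrableOn G (Icc a t) := fun t ht =>
    hG.mono_set (Icc_subset_Icc le_rfl ht.2)
  have hle_max : ∀ t ∈ Icc a b, y t ≤ y τ := fun t ht =>
    hτ_max ▸ le_csSup hbdd (mem_image_of_mem y ht)
  have hΦ : ContinuousOn (fun t => ∫ s in a..t, max (G s) 0) (Icc a τ) :=
    (IntegrableOn.continuousOn_intervalIntegral hG.pos_part).mono (Icc_subset_Icc le_rfl hτ.2)
  obtain ⟨c, hc, hΦc⟩ : ∃ c ∈ Icc a τ, ∫ s in a..c, max (G s) 0 = y τ - y a := by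
    refine intermediate_value_Icc hτ.1 hΦ ⟨?_, ?_⟩
    · rw [integral_same]
      linarith [hle_max a (left_mem_Icc.2 hab)]
    · linarith [hy τ hτ, intervalIntegral_le_intervalIntegral_max_zero hτ.1 (hint τ hτ)]
  refine ⟨c, ⟨hc.1, hc.2.trans hτ.2⟩, fun t ht => ?_, by rw [hΦc, hτ_max]; ring⟩
  rcases le_total t c with htc | hct
  · rw [min_eq_left htc, hy t ht]
    gcongr
    exact intervalIntegral_le_intervalIntegral_max_zero ht.1 (hint t ht)
  · rw [min_eq_right hct, hΦc]
    linarith [hle_max t ht]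

/-- Proposition 1 of the paper: for a fixed absolutely continuous
`y(t) = y(0) + ∫₀ᵗ G`, among the measurable controls `v : [0,T] → [0,1]` whose
associated state `z_v(t) = y(0) + ∫₀ᵗ max(G,0)(1-v)` satisfies the constraint
`z_v ≥ y` on `[0,T]`, (i) every admissible `v` has `z_v(T) ≥ sup_{[0,T]} y`;
(ii) some admissible `v` with values in `{0,1}` attains `z_v(T) = sup_{[0,T]} y`;
consequently the infimum of `z_v(T)` over admissible controls is attained and
equals `sup_{[0,T]} y`. -/
theorem stmt2 (T : ℝ) (hT : 0 < T) (G : ℝ → ℝ) (hG : IntegrableOn G (Icc 0 T))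
    (y : ℝ → ℝ) (hy : ∀ t ∈ Icc 0 T, y t = y 0 + ∫ s in (0:ℝ)..t, G s) :
    (∀ v : ℝ → ℝ, Measurable v → (∀ t, v t ∈ Icc (0:ℝ) 1) →
      (∀ t ∈ Icc 0 T, y 0 + (∫ s in (0:ℝ)..t, max (G s) 0 * (1 - v s)) ≥ y t) →
      y 0 + (∫ s in (0:ℝ)..T, max (G s) 0 * (1 - v s)) ≥ sSup (y '' Icc 0 T)) ∧
    (∃ v : ℝ → ℝ, Measurable v ∧ (∀ t, v t ∈ ({0, 1} : Set ℝ)) ∧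
      (∀ t, v t ∈ Icc (0:ℝ) 1) ∧
      (∀ t ∈ Icc 0 T, y 0 + (∫ s in (0:ℝ)..t, max (G s) 0 * (1 - v s)) ≥ y t) ∧
      y 0 + (∫ s in (0:ℝ)..T, max (G s) 0 * (1 - v s)) = sSup (y '' Icc 0 T)) ∧
    IsLeast {r : ℝ | ∃ v : ℝ → ℝ, Measurable v ∧ (∀ t, v t ∈ Icc (0:ℝ) 1) ∧
      (∀ t ∈ Icc 0 T, y 0 + (∫ s in (0:ℝ)..t, max (G s) 0 * (1 - v s)) ≥ y t) ∧
      r = y 0 + ∫ s in (0:ℝ)..T, max (G s) 0 * (1 - v s)}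
      (sSup (y '' Icc 0 T)) := by
  have lower_bound : ∀ v : ℝ → ℝ, Measurable v → (∀ t, v t ∈ Icc (0:ℝ) 1) →
      (∀ t ∈ Icc 0 T, y 0 + (∫ s in (0:ℝ)..t, max (G s) 0 * (1 - v s)) ≥ y t) →
      y 0 + (∫ s in (0:ℝ)..T, max (G s) 0 * (1 - v s)) ≥ sSup (y '' Icc 0 T) :=
    fun v hv hv₀₁ hadm => csSup_image_le_add_intervalIntegral hT.le
      (hG.max_zero_mul_one_sub hv.aestronglyMeasurable hv₀₁)
      (fun t => mul_nonneg (le_max_right _ _) (sub_nonneg.2 (hv₀₁ t).2)) hadm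
  obtain ⟨c, hc, hadm, hopt⟩ := exists_switchingTime hT.le hG hy
  set v : ℝ → ℝ := (Ioi c).indicator 1
  have hv_meas : Measurable v := measurable_const.indicator measurableSet_Ioi
  have hv_bang : ∀ t, v t ∈ ({0, 1} : Set ℝ) := fun t => by
    by_cases ht : t ∈ Ioi c <;> simp [v, ht]
  have hv₀₁ : ∀ t, v t ∈ Icc (0:ℝ) 1 := fun t => by
    by_cases ht : t ∈ Ioi c <;> simp [v, ht]
  have hz : ∀ t ∈ Icc 0 T, ∫ s in (0:ℝ)..t, max (G s) 0 * (1 - v s) =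
      ∫ s in (0:ℝ)..min t c, max (G s) 0 := fun t ht =>
    intervalIntegral_mul_one_sub_indicator_Ioi ht.1 hc.1
  have hv_adm : ∀ t ∈ Icc 0 T,
      y 0 + (∫ s in (0:ℝ)..t, max (G s) 0 * (1 - v s)) ≥ y t := fun t ht => by
    rw [hz t ht]; exact hadm t ht
  have hv_opt : y 0 + (∫ s in (0:ℝ)..T, max (G s) 0 * (1 - v s)) = sSup (y '' Icc 0 T) := by
    rw [hz T (right_mem_Icc.2 hT.le), min_eq_right hc.2, hopt]
  exact ⟨lower_bound, ⟨v, hv_meas, hv_bang, hv₀₁, hv_adm, hv_opt⟩,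
    ⟨v, hv_meas, hv₀₁, hv_adm, hv_opt.symm⟩,
    fun _ ⟨w, hw, hw₀₁, hw_adm, hr⟩ => hr ▸ lower_bound w hw hw₀₁ hw_adm⟩
end

section
/- Let T > 0 and let y : [0,T] → ℝ satisfy y(t) = y(0) + ∫₀ᵗ G(s) ds for all t ∈ [0,T], where G : [0,T] → ℝ is Lebesgue integrable. Let v : [0,T] → [0,1] be measurable and set z(t) := y(0) + ∫₀ᵗ max(G(s),0)·(1 − v(s)) ds. If the mixed constraint max(y(t) − z(t), 0)·(1 − v(t)) + z(t) − y(t) ≥ 0 holds for almost every t ∈ [0,T], then z(t) ≥ y(t) for all t ∈ [0,T]. -/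
/-!
Put `w := z - y = ∫₀ᵗ (max(G,0)(1 - v) - G)`. Wherever `w < 0`, the mixed constraint reads
`w · v ≥ 0`, which forces `v = 0` and makes the integrand `max(G,0) - G ≥ 0`. So `w` cannot
decrease while it is negative; since `w(0) = 0` and `w` is continuous, it never becomes negative.
-/

open MeasureTheory Set

theorem ContinuousOn.nonneg_of_le_of_forall_Ioc_neg {f : ℝ → ℝ} {a b : ℝ}
    (hf : ContinuousOn f (Icc a b)) (ha : 0 ≤ f a)
    (hstep : ∀ τ ∈ Icc a b, ∀ t ∈ Icc a b, τ < t → (∀ s ∈ Ioc τ t, f s < 0) → f τ ≤ f t) :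
    ∀ t ∈ Icc a b, 0 ≤ f t := by
  intro t ht
  by_contra! hft
  -- `τ` is the last time before `t` at which `f` is nonnegative.
  set S := Icc a t ∩ f ⁻¹' Ici 0
  have hS_closed : IsClosed S :=
    (hf.mono (Icc_subset_Icc_right ht.2)).preimage_isClosed_of_isClosed isClosed_Icc isClosed_Ici
  have hS_bdd : BddAbove S := ⟨t, fun s hs => hs.1.2⟩
  have hτS : sSup S ∈ S := hS_closed.csSup_mem ⟨a, ⟨left_mem_Icc.2 ht.1, ha⟩⟩ hS_bdd
  have hτ_nonneg : 0 ≤ f (sSup S) := hτS.2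
  have hτt : sSup S < t := lt_of_le_of_ne hτS.1.2 fun h => by rw [h] at hτ_nonneg; linarith
  have hneg : ∀ s ∈ Ioc (sSup S) t, f s < 0 := fun s hs => by
    by_contra! hfs
    exact hs.1.not_ge (le_csSup hS_bdd ⟨⟨hτS.1.1.trans hs.1.le, hs.2⟩, hfs⟩)
  have := hstep _ ⟨hτS.1.1, hτS.1.2.trans ht.2⟩ t ht hτt hneg
  linarith

theorem intervalIntegral_nonneg_of_ae_nonneg_of_neg {h : ℝ → ℝ} {a b : ℝ}
    (hh : IntegrableOn h (Icc a b))
    (hpos : ∀ᵐ s ∂volume.restrict (Icc a b), ∫ u in a..s, h u < 0 → 0 ≤ h s) :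
    ∀ t ∈ Icc a b, 0 ≤ ∫ s in a..t, h s := by
  have hII : ∀ τ ∈ Icc a b, ∀ t ∈ Icc a b, IntervalIntegrable h volume τ t := fun τ hτ t ht =>
    (hh.mono_set (ordConnected_Icc.uIcc_subset hτ ht)).intervalIntegrable
  refine ContinuousOn.nonneg_of_le_of_forall_Ioc_neg ?_ (by simp) ?_
  · intro t ht
    have hcont := intervalIntegral.continuousOn_primitive_interval (a := a) (b := b) (μ := volume)
      (by rwa [uIcc_of_le (ht.1.trans ht.2)])
    rw [uIcc_of_le (ht.1.trans ht.2)] at hcont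
    exact hcont t ht
  · intro τ hτ t ht hτt hneg
    have hpos' : ∀ᵐ s ∂volume.restrict (Ioc τ t), 0 ≤ h s := by
      filter_upwards [ae_restrict_of_ae_restrict_of_subset
        (Ioc_subset_Icc_self.trans (Icc_subset_Icc hτ.1 ht.2)) hpos,
        ae_restrict_mem measurableSet_Ioc] with s hs hsmem
      exact hs (hneg s hsmem)
    have hinc : 0 ≤ ∫ s in τ..t, h s := by
      rw [intervalIntegral.integral_of_le hτt.le]
      exact setIntegral_nonneg_of_ae_restrict hpos'
    have hleft := left_mem_Icc.2 (hτ.1.trans hτ.2)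
    rw [← intervalIntegral.integral_interval_sub_left (hII a hleft t ht) (hII a hleft τ hτ)] at hinc
    linarith

theorem Integrable.pos_part_mul_one_sub {α : Type*} [MeasurableSpace α] {μ : Measure α}
    {f g : α → ℝ} (hf : Integrable f μ) (hg : AEMeasurable g μ) (hg01 : ∀ x, g x ∈ Icc 0 1) :
    Integrable (fun x => max (f x) 0 * (1 - g x)) μ := by
  refine hf.pos_part.mul_bdd (c := 1) (hg.const_sub 1).aestronglyMeasurable ?_
  filter_upwards with x
  rw [Real.norm_eq_abs, abs_le]
  constructor <;> linarith [(hg01 x).1, (hg01 x).2]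

theorem stmt3_general (T : ℝ) (G : ℝ → ℝ) (hG : IntegrableOn G (Icc 0 T))
    (y : ℝ → ℝ) (hy : ∀ t ∈ Icc 0 T, y t = y 0 + ∫ s in (0:ℝ)..t, G s)
    (v : ℝ → ℝ) (hv : Measurable v) (hv01 : ∀ t, v t ∈ Icc (0:ℝ) 1)
    (z : ℝ → ℝ)
    (hz : ∀ t ∈ Icc 0 T, z t = y 0 + ∫ s in (0:ℝ)..t, max (G s) 0 * (1 - v s))
    (hmixed : ∀ᵐ t ∂(volume.restrict (Icc 0 T)),
      max (y t - z t) 0 * (1 - v t) + z t - y t ≥ 0) :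
    ∀ t ∈ Icc 0 T, z t ≥ y t := by
  set h : ℝ → ℝ := fun s => max (G s) 0 * (1 - v s) - G s
  have hpart : IntegrableOn (fun s => max (G s) 0 * (1 - v s)) (Icc 0 T) :=
    Integrable.pos_part_mul_one_sub hG hv.aemeasurable hv01
  have hzy : ∀ t ∈ Icc 0 T, z t - y t = ∫ s in (0:ℝ)..t, h s := fun t ht => by
    have hsub := ordConnected_Icc.uIcc_subset (left_mem_Icc.2 (ht.1.trans ht.2)) ht
    rw [hz t ht, hy t ht, intervalIntegral.integral_sub
      (hpart.mono_set hsub).intervalIntegrable (hG.mono_set hsub).intervalIntegrable]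
    ring
  have hpos : ∀ᵐ s ∂volume.restrict (Icc 0 T), ∫ u in (0:ℝ)..s, h u < 0 → 0 ≤ h s := by
    filter_upwards [hmixed, ae_restrict_mem measurableSet_Icc] with s hs hsmem hneg
    rw [← hzy s hsmem] at hneg
    rw [max_eq_left (by linarith)] at hs
    have hv0 : v s = 0 := le_antisymm (by nlinarith) (hv01 s).1
    simp only [h, hv0, sub_zero, mul_one, sub_nonneg, le_max_left]
  intro t ht
  have := intervalIntegral_nonneg_of_ae_nonneg_of_neg (h := h) (hpart.sub hG) hpos t ht
  linarith [hzy t ht]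

/-- core of Proposition 3 of the paper: if
`z(t) = y(0) + ∫₀ᵗ max(G,0)(1-v)` and the mixed constraint
`max(y-z,0)(1-v) + z - y ≥ 0` holds a.e. on `[0,T]`, then `z ≥ y` on `[0,T]`. -/
theorem stmt3 (T : ℝ) (hT : 0 < T) (G : ℝ → ℝ) (hG : IntegrableOn G (Icc 0 T))
    (y : ℝ → ℝ) (hy : ∀ t ∈ Icc 0 T, y t = y 0 + ∫ s in (0:ℝ)..t, G s)
    (v : ℝ → ℝ) (hv : Measurable v) (hv01 : ∀ t, v t ∈ Icc (0:ℝ) 1)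
    (z : ℝ → ℝ)
    (hz : ∀ t ∈ Icc 0 T, z t = y 0 + ∫ s in (0:ℝ)..t, max (G s) 0 * (1 - v s))
    (hmixed : ∀ᵐ t ∂(volume.restrict (Icc 0 T)),
      max (y t - z t) 0 * (1 - v t) + z t - y t ≥ 0) :
    ∀ t ∈ Icc 0 T, z t ≥ y t :=
  stmt3_general T G hG y hy v hv hv01 z hz hmixed
end

section
/- Let T > 0, let U ⊆ ℝᵖ be a nonempty compact set, and let f : ℝⁿ × ℝ × ℝᵖ → ℝⁿ and g : ℝⁿ × ℝ × ℝᵖ → ℝ be continuously differentiable functions satisfying the linear growth condition ‖f(x,y,u)‖ + |g(x,y,u)| ≤ C(1 + ‖x‖ + |y|) for some C > 0 and all (x,y) and u ∈ U. Fix (x₀,y₀). For a measurable control u : [0,T] → U, let (x,y) denote the absolutely continuous solution of ẋ = f(x,y,u(t)), ẏ = g(x,y,u(t)) with (x(0),y(0)) = (x₀,y₀). Then the infimum over measurable u of sup_{t ∈ [0,T]} y(t) equals the infimum, over measurable controls (u,v) with v : [0,T] → [0,1] and over the corresponding absolutely continuous solutions (x,y,z) of the extended system ẋ = f(x,y,u(t)),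 ẏ = g(x,y,u(t)), ż = max(g(x,y,u(t)),0)(1 − v(t)) with (x(0),y(0),z(0)) = (x₀,y₀,y₀) that satisfy the state constraint z(t) ≥ y(t) for all t ∈ [0,T], of the terminal value z(T). -/
/-!
Along an admissible trajectory, the running maximum `M t = max_{[0,t]} y` satisfies
`0 ≤ M b - M a ≤ ∫_a^b max(g,0)` for `a ≤ b`, since `y s ≤ y a + ∫_a^s max(g,0)`. So the
Stieltjes measure `dM` is dominated by `max(g,0) dt` and has a density `ρ` with
`0 ≤ ρ ≤ max(g,0)`. The control `v = 1 - ρ / max(g,0)` then makes `z = M`, a point of `P₁` with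
value `M T = max_{[0,T]} y`. Conversely, `z` is nondecreasing, so under the state constraint
`y t ≤ z t ≤ z T` for every `t`.
-/

open MeasureTheory Set Filter Topology intervalIntegral

lemma continuousWithinAt_Ici_of_sub_le_sub {M N : ℝ → ℝ} (hM : Monotone M) (hN : Continuous N)
    (hMN : ∀ a b, a ≤ b → M b - M a ≤ N b - N a) (a : ℝ) : ContinuousWithinAt M (Ici a) a := by
  have hbound : Tendsto (fun b => M a + (N b - N a)) (𝓝[≥] a) (𝓝 (M a)) := by
    have h : Tendsto (fun b => M a + (N b - N a)) (𝓝 a) (𝓝 (M a + (N a - N a))) :=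
      tendsto_const_nhds.add ((hN.tendsto a).sub tendsto_const_nhds)
    simpa using h.mono_left nhdsWithin_le_nhds
  refine tendsto_of_tendsto_of_tendsto_of_le_of_le' tendsto_const_nhds hbound ?_ ?_
  · filter_upwards [self_mem_nhdsWithin] with b hb using hM hb
  · filter_upwards [self_mem_nhdsWithin] with b hb using by linarith [hMN a b hb]

lemma integral_sub_integral_of_integrable {H : ℝ → ℝ} (hH : Integrable H) (a b : ℝ) :
    (∫ s in (0:ℝ)..b, H s) - ∫ s in (0:ℝ)..a, H s = ∫ s in a..b, H s :=
  integral_interval_sub_left hH.intervalIntegrable hH.intervalIntegrable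

namespace StieltjesFunction

lemma measure_le_of_sub_le_sub (S S' : StieltjesFunction ℝ)
    (h : ∀ a b, a ≤ b → S b - S a ≤ S' b - S' a) : S.measure ≤ S'.measure := by
  let D : StieltjesFunction ℝ :=
    ⟨fun t => S' t - S t, fun a b hab => by linarith [h a b hab],
      fun a => (S'.right_continuous a).sub (S.right_continuous a)⟩
  have hSD : S + D = S' := by ext t; simp [D]
  rw [← hSD, measure_add]
  exact Measure.le_add_right le_rfl

variable {H : ℝ → ℝ}

noncomputable def primitive (hH : Integrable H) (hH0 : 0 ≤ H) : StieltjesFunction ℝ where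
  toFun t := ∫ s in (0:ℝ)..t, H s
  mono' a b hab := by
    have := integral_nonneg (μ := volume) hab fun s _ => hH0 s
    dsimp only
    linarith [integral_sub_integral_of_integrable hH a b]
  right_continuous' _ := (hH.continuous_primitive 0).continuousWithinAt

lemma primitive_sub (hH : Integrable H) (hH0 : 0 ≤ H) (a b : ℝ) :
    primitive hH hH0 b - primitive hH hH0 a = ∫ s in a..b, H s :=
  integral_sub_integral_of_integrable hH a b

lemma measure_primitive (hH : Integrable H) (hH0 : 0 ≤ H) :
    (primitive hH hH0).measure = volume.withDensity fun s => ENNReal.ofReal (H s) := by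
  refine Measure.ext_of_Ioc _ _ fun a b hab => ?_
  rw [measure_Ioc, withDensity_apply _ measurableSet_Ioc, primitive_sub, integral_of_le hab.le]
  exact ofReal_integral_eq_lintegral_ofReal hH.integrableOn (ae_of_all _ fun s => hH0 s)

end StieltjesFunction

theorem exists_density_of_sub_le_integral {M H : ℝ → ℝ} (hM : Monotone M) (hHm : Measurable H)
    (hHi : Integrable H) (hH0 : 0 ≤ H) (hMH : ∀ a b, a ≤ b → M b - M a ≤ ∫ s in a..b, H s) :
    ∃ ρ : ℝ → ℝ, Measurable ρ ∧ Integrable ρ ∧ 0 ≤ ρ ∧ ρ ≤ H ∧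
      ∀ a b, a ≤ b → M b - M a = ∫ s in a..b, ρ s := by
  set P := StieltjesFunction.primitive hHi hH0
  have hMP : ∀ a b, a ≤ b → M b - M a ≤ P b - P a := fun a b hab => by
    rw [StieltjesFunction.primitive_sub]
    exact hMH a b hab
  let S : StieltjesFunction ℝ :=
    ⟨M, hM, continuousWithinAt_Ici_of_sub_le_sub hM (hHi.continuous_primitive 0) hMP⟩
  have hSP : S.measure ≤ volume.withDensity fun s => ENNReal.ofReal (H s) :=
    StieltjesFunction.measure_primitive hHi hH0 ▸ S.measure_le_of_sub_le_sub P hMP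
  have hSac : S.measure ≪ volume :=
    (Measure.absolutelyContinuous_of_le hSP).trans (withDensity_absolutelyContinuous _ _)
  set r := S.measure.rnDeriv volume
  have hrH : ∀ᵐ s, (r s).toReal ≤ H s := by
    have hr : r ≤ᵐ[volume] fun s => ENNReal.ofReal (H s) := by
      refine ae_le_of_forall_setLIntegral_le_of_sigmaFinite (Measure.measurable_rnDeriv _ _)
        fun s hs _ => ?_
      rw [← withDensity_apply _ hs, ← withDensity_apply _ hs,
        Measure.withDensity_rnDeriv_eq _ _ hSac]
      exact hSP s
    exact hr.mono fun s hs => ENNReal.toReal_le_of_le_ofReal (hH0 s) hs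
  set ρ := fun s => min (r s).toReal (H s)
  have hρm : Measurable ρ := (Measure.measurable_rnDeriv _ _).ennreal_toReal.min hHm
  have hρ0 : 0 ≤ ρ := fun s => le_min ENNReal.toReal_nonneg (hH0 s)
  have hρH : ρ ≤ H := fun s => min_le_right _ _
  refine ⟨ρ, hρm, hHi.mono' hρm.aestronglyMeasurable (ae_of_all _ fun s => ?_), hρ0, hρH,
    fun a b hab => ?_⟩
  · rw [Real.norm_eq_abs, abs_of_nonneg (hρ0 s)]
    exact hρH s
  calc M b - M a = S.measure.real (Ioc a b) := by
        rw [measureReal_def, S.measure_Ioc, ENNReal.toReal_ofReal (sub_nonneg.2 (hM hab))]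
    _ = ∫ s in Ioc a b, (r s).toReal := (Measure.setIntegral_toReal_rnDeriv hSac _).symm
    _ = ∫ s in a..b, ρ s := by
        rw [integral_of_le hab]
        exact setIntegral_congr_ae measurableSet_Ioc (hrH.mono fun s hs _ => (min_eq_left hs).symm)

noncomputable def runningSup (F : ℝ → ℝ) (t : ℝ) : ℝ := sSup (F '' Iic t)

section runningSup

variable {F N : ℝ → ℝ}

lemma le_runningSup (hF : BddAbove (range F)) {s t : ℝ} (hst : s ≤ t) : F s ≤ runningSup F t :=
  le_csSup (hF.mono (image_subset_range _ _)) (mem_image_of_mem _ hst)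

lemma runningSup_le {c t : ℝ} (h : ∀ s ≤ t, F s ≤ c) : runningSup F t ≤ c :=
  csSup_le (nonempty_Iic.image _) (forall_mem_image.2 h)

lemma runningSup_mono (hF : BddAbove (range F)) : Monotone (runningSup F) :=
  fun _ _ hab => runningSup_le fun _ hs => le_runningSup hF (hs.trans hab)

lemma runningSup_sub_le_sub (hF : BddAbove (range F)) (hN : Monotone N)
    (hFN : ∀ a s, a ≤ s → F s - F a ≤ N s - N a) {a b : ℝ} (hab : a ≤ b) :
    runningSup F b - runningSup F a ≤ N b - N a := by
  suffices runningSup F b ≤ runningSup F a + (N b - N a) by linarith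
  have hFa : F a ≤ runningSup F a := le_runningSup hF le_rfl
  refine runningSup_le fun s hsb => ?_
  rcases le_total s a with hsa | has
  · linarith [le_runningSup hF hsa, hN hab]
  · linarith [hFN a s has, hN hsb]

lemma runningSup_eq_sSup_image_Icc {y : ℝ → ℝ} {T : ℝ} (hT : 0 ≤ T) (hFy : EqOn F y (Icc 0 T))
    (hF0 : ∀ t ≤ 0, F t = F 0) : runningSup F T = sSup (y '' Icc 0 T) := by
  unfold runningSup
  congr 1
  ext r
  constructor
  · rintro ⟨s, hsT, rfl⟩
    rcases le_total s 0 with hs0 | hs0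
    · exact ⟨0, ⟨le_rfl, hT⟩, by rw [hF0 s hs0, hFy ⟨le_rfl, hT⟩]⟩
    · exact ⟨s, ⟨hs0, hsT⟩, (hFy ⟨hs0, hsT⟩).symm⟩
  · rintro ⟨s, hs, rfl⟩
    exact ⟨s, hs.2, hFy hs⟩

lemma bddAbove_range_of_eq_add_primitive {G : ℝ → ℝ} (hG : Integrable G)
    (hF : ∀ t, F t = F 0 + ∫ s in (0:ℝ)..t, G s) : BddAbove (range F) := by
  refine ⟨F 0 + ∫ s, ‖G s‖, forall_mem_range.2 fun t => ?_⟩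
  rw [hF t]
  gcongr
  calc (∫ s in (0:ℝ)..t, G s) ≤ ‖∫ s in (0:ℝ)..t, G s‖ := Real.le_norm_self _
    _ ≤ ∫ s in uIoc 0 t, ‖G s‖ := norm_integral_le_integral_norm_uIoc
    _ ≤ ∫ s, ‖G s‖ := setIntegral_le_integral hG.norm (ae_of_all _ fun s => norm_nonneg _)

theorem exists_density_runningSup {G H : ℝ → ℝ} (hF : ∀ t, F t = F 0 + ∫ s in (0:ℝ)..t, G s)
    (hGi : Integrable G) (hGH : G ≤ H) (hHm : Measurable H) (hHi : Integrable H) (hH0 : 0 ≤ H) :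
    ∃ ρ : ℝ → ℝ, Measurable ρ ∧ Integrable ρ ∧ 0 ≤ ρ ∧ ρ ≤ H ∧
      ∀ a b, a ≤ b → runningSup F b - runningSup F a = ∫ s in a..b, ρ s := by
  have hFb := bddAbove_range_of_eq_add_primitive hGi hF
  refine exists_density_of_sub_le_integral (runningSup_mono hFb) hHm hHi hH0 fun a b hab => ?_
  rw [← StieltjesFunction.primitive_sub hHi hH0]
  refine runningSup_sub_le_sub hFb (StieltjesFunction.mono _) (fun a s has => ?_) hab
  calc F s - F a = ∫ r in a..s, G r := by
        rw [hF s, hF a, add_sub_add_left_eq_sub, integral_sub_integral_of_integrable hGi]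
    _ ≤ ∫ r in a..s, H r := integral_mono has hGi.intervalIntegrable hHi.intervalIntegrable hGH
    _ = _ := (StieltjesFunction.primitive_sub hHi hH0 a s).symm

end runningSup

lemma exists_measurable_mul_one_sub_eq {α : Type*} [MeasurableSpace α] {h ρ : α → ℝ}
    (hh : Measurable h) (hρ : Measurable ρ) (hρ0 : 0 ≤ ρ) (hρh : ρ ≤ h) :
    ∃ v : α → ℝ, Measurable v ∧ (∀ s, v s ∈ Icc (0:ℝ) 1) ∧ ∀ s, h s * (1 - v s) = ρ s := by
  -- where `h s = 0` we also have `ρ s = 0`, and `ρ s / h s = 0` by convention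
  refine ⟨fun s => 1 - ρ s / h s, measurable_const.sub (hρ.div hh), fun s => ?_, fun s => ?_⟩
  · have h0 : 0 ≤ ρ s / h s := div_nonneg (hρ0 s) ((hρ0 s).trans (hρh s))
    have h1 : ρ s / h s ≤ 1 := div_le_one_of_le₀ (hρh s) ((hρ0 s).trans (hρh s))
    constructor <;> linarith
  · rcases eq_or_ne (h s) 0 with hs | hs
    · simp [hs, le_antisymm ((hρh s).trans hs.le) (hρ0 s)]
    · field_simp
      ring

section extension

variable {T : ℝ} {G : ℝ → ℝ}

lemma integral_indicator_Ioc_of_mem {t : ℝ} (ht : t ∈ Icc 0 T) :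
    ∫ s in (0:ℝ)..t, (Ioc 0 T).indicator G s = ∫ s in (0:ℝ)..t, G s := by
  refine intervalIntegral.integral_congr_ae (ae_of_all _ fun s hs => ?_)
  rw [uIoc_of_le ht.1] at hs
  exact indicator_of_mem (Ioc_subset_Ioc_right ht.2 hs) G

lemma integral_indicator_Ioc_of_nonpos {t : ℝ} (ht : t ≤ 0) :
    ∫ s in (0:ℝ)..t, (Ioc 0 T).indicator G s = 0 := by
  refine integral_zero_ae (ae_of_all _ fun s hs => ?_)
  rw [uIoc_of_ge ht] at hs
  exact indicator_of_notMem (fun h => (h.1.trans_le hs.2).false) G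

end extension

theorem exists_density_runningMax {T : ℝ} (hT : 0 ≤ T) {y G : ℝ → ℝ} (hGm : Measurable G)
    (hGi : IntegrableOn G (Icc 0 T)) (hy : ∀ t ∈ Icc 0 T, y t = y 0 + ∫ s in (0:ℝ)..t, G s) :
    ∃ ρ : ℝ → ℝ, Measurable ρ ∧ Integrable ρ ∧ 0 ≤ ρ ∧ (∀ s, ρ s ≤ max (G s) 0) ∧
      (∀ t ∈ Icc 0 T, y t ≤ y 0 + ∫ s in (0:ℝ)..t, ρ s) ∧
      y 0 + ∫ s in (0:ℝ)..T, ρ s = sSup (y '' Icc 0 T) := by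
  have hGi' : IntegrableOn G (Ioc 0 T) := hGi.mono_set Ioc_subset_Icc_self
  -- `F` extends `y` from `[0, T]` to the whole line, constant outside `[0, T]`
  set F : ℝ → ℝ := fun t => y 0 + ∫ s in (0:ℝ)..t, (Ioc 0 T).indicator G s
  have hF : ∀ t, F t = F 0 + ∫ s in (0:ℝ)..t, (Ioc 0 T).indicator G s := fun t => by simp [F]
  have hFi := hGi'.integrable_indicator measurableSet_Ioc
  have hFy : EqOn F y (Icc 0 T) := fun t ht => by
    simp only [F, integral_indicator_Ioc_of_mem ht, ← hy t ht]
  have hF0 : ∀ t ≤ 0, F t = F 0 := fun t ht => by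
    simp only [F, integral_indicator_Ioc_of_nonpos ht, integral_same]
  obtain ⟨ρ, hρm, hρi, hρ0, hρH, hρ⟩ := exists_density_runningSup hF hFi
    (fun s => indicator_le_indicator (le_max_left (G s) 0))
    ((hGm.max measurable_const).indicator measurableSet_Ioc)
    (IntegrableOn.integrable_indicator hGi'.pos_part measurableSet_Ioc)
    (indicator_nonneg fun s _ => le_max_right _ _)
  have hM0 : runningSup F 0 = y 0 := by
    rw [runningSup_eq_sSup_image_Icc le_rfl (hFy.mono (Icc_subset_Icc_right hT)) hF0]
    simp
  have hMρ : ∀ t, 0 ≤ t → runningSup F t = y 0 + ∫ s in (0:ℝ)..t, ρ s := fun t ht => by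
    rw [← hρ 0 t ht, hM0]
    ring
  refine ⟨ρ, hρm, hρi, hρ0,
    fun s => (hρH s).trans (indicator_le_self' (fun s _ => le_max_right _ _) s),
    fun t ht => ?_, ?_⟩
  · rw [← hMρ t ht.1, ← hFy ht]
    exact le_runningSup (bddAbove_range_of_eq_add_primitive hFi hF) le_rfl
  · rw [← hMρ T hT, runningSup_eq_sSup_image_Icc hT hFy hF0]

lemma sSup_image_Icc_le_of_le_primitive {T c : ℝ} (hT : 0 ≤ T) {y z h : ℝ → ℝ}
    (hh : IntegrableOn h (Icc 0 T)) (hh0 : 0 ≤ h)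
    (hz : ∀ t ∈ Icc 0 T, z t = c + ∫ s in (0:ℝ)..t, h s) (hyz : ∀ t ∈ Icc 0 T, z t ≥ y t) :
    sSup (y '' Icc 0 T) ≤ z T := by
  refine csSup_le ((nonempty_Icc.2 hT).image y) (forall_mem_image.2 fun t ht => (hyz t ht).trans ?_)
  rw [hz t ht, hz T ⟨hT, le_rfl⟩]
  gcongr
  exact integral_mono_interval le_rfl ht.1 ht.2 (ae_of_all _ hh0)
    ((intervalIntegrable_iff_integrableOn_Icc_of_le hT).2 hh)

lemma integrableOn_Icc_of_linear_growth {E V : Type*} [NormedAddCommGroup E] [MeasurableSpace E]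
    [BorelSpace E] [SecondCountableTopology E] [TopologicalSpace V] [MeasurableSpace V]
    [BorelSpace V] [SecondCountableTopology V] {g : E × ℝ × V → ℝ} (hg : Continuous g)
    {U : Set V} {C : ℝ} (hgrowth : ∀ x y u, u ∈ U → |g (x, y, u)| ≤ C * (1 + ‖x‖ + |y|))
    ⦃u : ℝ → V⦄ ⦃x : ℝ → E⦄ ⦃y : ℝ → ℝ⦄ (hu : Measurable u) (huU : ∀ t, u t ∈ U)
    (hx : Continuous x) (hy : Continuous y) (a b : ℝ) :
    IntegrableOn (fun s => g (x s, y s, u s)) (Icc a b) :=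
  (by fun_prop : Continuous fun s => C * (1 + ‖x s‖ + |y s|)).integrableOn_Icc.mono'
    (hg.measurable.comp (hx.measurable.prodMk (hy.measurable.prodMk hu))).aestronglyMeasurable
    (ae_of_all _ fun s => hgrowth _ _ _ (huU s))

theorem stmt5_general (n p : ℕ) (T : ℝ) (hT : 0 < T)
    (U : Set (EuclideanSpace ℝ (Fin p)))
    (f : EuclideanSpace ℝ (Fin n) × ℝ × EuclideanSpace ℝ (Fin p) → EuclideanSpace ℝ (Fin n))
    (g : EuclideanSpace ℝ (Fin n) × ℝ × EuclideanSpace ℝ (Fin p) → ℝ)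
    (hg : ContDiff ℝ 1 g)
    (C : ℝ)
    (hgrowth : ∀ x y u, u ∈ U → ‖f (x, y, u)‖ + |g (x, y, u)| ≤ C * (1 + ‖x‖ + |y|))
    (x₀ : EuclideanSpace ℝ (Fin n)) (y₀ : ℝ) :
    sInf {r : ℝ |
      ∃ (u : ℝ → EuclideanSpace ℝ (Fin p)) (x : ℝ → EuclideanSpace ℝ (Fin n)) (y : ℝ → ℝ),
        Measurable u ∧ (∀ t, u t ∈ U) ∧ Continuous x ∧ Continuous y ∧
        x 0 = x₀ ∧ y 0 = y₀ ∧
        (∀ t ∈ Icc 0 T, x t = x₀ + ∫ s in (0:ℝ)..t, f (x s, y s, u s)) ∧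
        (∀ t ∈ Icc 0 T, y t = y₀ + ∫ s in (0:ℝ)..t, g (x s, y s, u s)) ∧
        r = sSup (y '' Icc 0 T)} =
    sInf {r : ℝ |
      ∃ (u : ℝ → EuclideanSpace ℝ (Fin p)) (v : ℝ → ℝ)
        (x : ℝ → EuclideanSpace ℝ (Fin n)) (y z : ℝ → ℝ),
        Measurable u ∧ (∀ t, u t ∈ U) ∧ Measurable v ∧ (∀ t, v t ∈ Icc (0:ℝ) 1) ∧
        Continuous x ∧ Continuous y ∧ Continuous z ∧
        x 0 = x₀ ∧ y 0 = y₀ ∧ z 0 = y₀ ∧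
        (∀ t ∈ Icc 0 T, x t = x₀ + ∫ s in (0:ℝ)..t, f (x s, y s, u s)) ∧
        (∀ t ∈ Icc 0 T, y t = y₀ + ∫ s in (0:ℝ)..t, g (x s, y s, u s)) ∧
        (∀ t ∈ Icc 0 T, z t = y₀ + ∫ s in (0:ℝ)..t, max (g (x s, y s, u s)) 0 * (1 - v s)) ∧
        (∀ t ∈ Icc 0 T, z t ≥ y t) ∧
        r = z T} := by
  have hgi := integrableOn_Icc_of_linear_growth hg.continuous
    (fun x y u hu => (le_add_of_nonneg_left (norm_nonneg _)).trans (hgrowth x y u hu))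
  apply csInf_eq_csInf_of_forall_exists_le
  · rintro r ⟨u, x, y, hu, huU, hx, hy, hx0, rfl, hxint, hyint, rfl⟩
    have hGm : Measurable fun s => g (x s, y s, u s) :=
      hg.continuous.measurable.comp (hx.measurable.prodMk (hy.measurable.prodMk hu))
    obtain ⟨ρ, hρm, hρi, hρ0, hρG, hyρ, hρT⟩ :=
      exists_density_runningMax hT.le hGm (hgi hu huU hx hy 0 T) hyint
    obtain ⟨v, hvm, hv01, hvρ⟩ :=
      exists_measurable_mul_one_sub_eq (hGm.max measurable_const) hρm hρ0 hρG
    refine ⟨_, ⟨u, v, x, y, fun t => y 0 + ∫ s in (0:ℝ)..t, ρ s, hu, huU, hvm, hv01, hx, hy,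
      continuous_const.add (hρi.continuous_primitive 0), hx0, rfl, by simp, hxint, hyint,
      fun t _ => by simp only [hvρ], hyρ, rfl⟩, hρT.le⟩
  · rintro r ⟨u, v, x, y, z, hu, huU, hvm, hv01, hx, hy, -, hx0, hy0, -, hxint, hyint, hzint,
      hzy, rfl⟩
    refine ⟨_, ⟨u, x, y, hu, huU, hx, hy, hx0, hy0, hxint, hyint, rfl⟩,
      sSup_image_Icc_le_of_le_primitive hT.le ?_
        (fun s => mul_nonneg (le_max_right _ _) (sub_nonneg.2 (hv01 s).2)) hzint hzy⟩
    exact (hgi hu huU hx hy 0 T).pos_part.mul_bdd (c := 1)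
      (measurable_const.sub hvm).aestronglyMeasurable
      (ae_of_all _ fun s => abs_le.2 ⟨by linarith [(hv01 s).2], by linarith [(hv01 s).1]⟩)

/-- Propositions 1 and 2 of the paper: the optimal value of the
peak-minimization problem `P` (minimize `sup_{[0,T]} y` over measurable controls
`u` valued in the compact set `U`) equals the optimal value of the extended
Mayer problem `P₁` (minimize `z(T)` over measurable controls `(u,v)` with `v`
valued in `[0,1]`, for the extended dynamics
`ẋ = f, ẏ = g, ż = max(g,0)(1-v)` with `z(0) = y(0) = y₀`, under the state
constraint `z ≥ y` on `[0,T]`). Solutions are absolutely continuous (here: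
continuous and given in integral form). -/
theorem stmt5 (n p : ℕ) (T : ℝ) (hT : 0 < T)
    (U : Set (EuclideanSpace ℝ (Fin p))) (hUne : U.Nonempty) (hUcomp : IsCompact U)
    (f : EuclideanSpace ℝ (Fin n) × ℝ × EuclideanSpace ℝ (Fin p) → EuclideanSpace ℝ (Fin n))
    (g : EuclideanSpace ℝ (Fin n) × ℝ × EuclideanSpace ℝ (Fin p) → ℝ)
    (hf : ContDiff ℝ 1 f) (hg : ContDiff ℝ 1 g)
    (C : ℝ) (hC : 0 < C)
    (hgrowth : ∀ x y u, u ∈ U → ‖f (x, y, u)‖ + |g (x, y, u)| ≤ C * (1 + ‖x‖ + |y|))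
    (x₀ : EuclideanSpace ℝ (Fin n)) (y₀ : ℝ) :
    sInf {r : ℝ |
      ∃ (u : ℝ → EuclideanSpace ℝ (Fin p)) (x : ℝ → EuclideanSpace ℝ (Fin n)) (y : ℝ → ℝ),
        Measurable u ∧ (∀ t, u t ∈ U) ∧ Continuous x ∧ Continuous y ∧
        x 0 = x₀ ∧ y 0 = y₀ ∧
        (∀ t ∈ Icc 0 T, x t = x₀ + ∫ s in (0:ℝ)..t, f (x s, y s, u s)) ∧
        (∀ t ∈ Icc 0 T, y t = y₀ + ∫ s in (0:ℝ)..t, g (x s, y s, u s)) ∧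
        r = sSup (y '' Icc 0 T)} =
    sInf {r : ℝ |
      ∃ (u : ℝ → EuclideanSpace ℝ (Fin p)) (v : ℝ → ℝ)
        (x : ℝ → EuclideanSpace ℝ (Fin n)) (y z : ℝ → ℝ),
        Measurable u ∧ (∀ t, u t ∈ U) ∧ Measurable v ∧ (∀ t, v t ∈ Icc (0:ℝ) 1) ∧
        Continuous x ∧ Continuous y ∧ Continuous z ∧
        x 0 = x₀ ∧ y 0 = y₀ ∧ z 0 = y₀ ∧
        (∀ t ∈ Icc 0 T, x t = x₀ + ∫ s in (0:ℝ)..t, f (x s, y s, u s)) ∧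
        (∀ t ∈ Icc 0 T, y t = y₀ + ∫ s in (0:ℝ)..t, g (x s, y s, u s)) ∧
        (∀ t ∈ Icc 0 T, z t = y₀ + ∫ s in (0:ℝ)..t, max (g (x s, y s, u s)) 0 * (1 - v s)) ∧
        (∀ t ∈ Icc 0 T, z t ≥ y t) ∧
        r = z T} :=
  stmt5_general n p T hT U f g hg C hgrowth x₀ y₀
end

section
/- Let T > 0, let U ⊆ ℝᵖ be a nonempty compact set, and let f : ℝⁿ × ℝ × ℝᵖ → ℝⁿ and g : ℝⁿ × ℝ × ℝᵖ → ℝ be continuously differentiable with linear growth. Fix (x₀,y₀) and consider absolutely continuous solutions (x,y,z) of the extended system ẋ = f(x,y,u(t)), ẏ = g(x,y,u(t)), ż = max(g(x,y,u(t)),0)(1 − v(t)) with (x(0),y(0),z(0)) = (x₀,y₀,y₀), for measurable controls u : [0,T] → U and v : [0,T] → [0,1]. Then the infimum of z(T) over such solutions satisfying the state constraint C: z(t) ≥ y(t) for all t ∈ [0,T], equals the infimum of z(T) over such solutions satisfying the mixed constraint C_m: max(y(t) − z(t), 0)(1 − v(t)) + z(t) − y(t) ≥ 0 for almost every t ∈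 [0,T]. -/
/-!
The two feasible sets coincide. Where `z ≥ y` the mixed constraint reads `z - y ≥ 0`. Conversely,
at a.e. time where `y > z` the mixed constraint forces `v = 0`, so there `ż = max(g, 0) ≥ g = ẏ`:
the gap `y - z` cannot grow while it is positive, and since it starts at `0` it never becomes
positive.
-/

open MeasureTheory Set
open scoped Interval

theorem intervalIntegrable_comp_of_mapsTo {X E : Type*} [TopologicalSpace X]
    [NormedAddCommGroup E] {F : X → E} (hF : Continuous F) {γ : ℝ → X} {a b : ℝ}
    (hγ : AEStronglyMeasurable γ (volume.restrict (Ι a b))) {K : Set X} (hK : IsCompact K)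
    (hγK : MapsTo γ (Ι a b) K) : IntervalIntegrable (fun t => F (γ t)) volume a b := by
  obtain ⟨M, hM⟩ := hK.exists_bound_of_continuousOn hF.continuousOn
  refine (intervalIntegrable_iff.2 <| IntegrableOn.of_bound measure_Ioc_lt_top
    (hF.comp_aestronglyMeasurable hγ) M ?_)
  filter_upwards [ae_restrict_mem measurableSet_uIoc] with t ht
  exact hM _ (hγK ht)

theorem nonpos_of_eq_add_integral {w h : ℝ → ℝ} {T : ℝ}
    (hw : ContinuousOn w (Icc 0 T)) (hw0 : w 0 ≤ 0) (hh : IntervalIntegrable h volume 0 T)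
    (hwh : ∀ t ∈ Icc 0 T, w t = w 0 + ∫ s in 0..t, h s)
    (hneg : ∀ᵐ s ∂(volume.restrict (Icc 0 T)), 0 < w s → h s ≤ 0) :
    ∀ t ∈ Icc 0 T, w t ≤ 0 := by
  intro t ht
  by_contra! hpos
  have hclosed : IsClosed (Icc 0 t ∩ w ⁻¹' Iic 0) :=
    (hw.mono (Icc_subset_Icc_right ht.2)).preimage_isClosed_of_isClosed isClosed_Icc isClosed_Iic
  obtain ⟨τ, ⟨⟨hτ0, hτt⟩, hwτ⟩, hτmax⟩ : ∃ τ, IsGreatest (Icc 0 t ∩ w ⁻¹' Iic 0) τ :=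
    (isCompact_Icc.of_isClosed_subset hclosed inter_subset_left).exists_isGreatest
      ⟨0, ⟨le_rfl, ht.1⟩, hw0⟩
  have hw_pos : ∀ s ∈ Ioc τ t, 0 < w s := fun s hs => by
    by_contra! hs'
    exact (hτmax ⟨⟨hτ0.trans hs.1.le, hs.2⟩, hs'⟩).not_gt hs.1
  have hint : ∀ c ∈ Icc 0 t, IntervalIntegrable h volume 0 c := fun c hc =>
    hh.mono_set (uIcc_subset_uIcc left_mem_uIcc (mem_uIcc_of_le hc.1 (hc.2.trans ht.2)))
  have hincr : w t - w τ = ∫ s in τ..t, h s := by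
    rw [hwh t ht, hwh τ ⟨hτ0, hτt.trans ht.2⟩, ← intervalIntegral.integral_interval_sub_left
      (hint t ⟨ht.1, le_rfl⟩) (hint τ ⟨hτ0, hτt⟩)]
    ring
  have hintegral_nonpos : ∫ s in τ..t, h s ≤ 0 := by
    rw [intervalIntegral.integral_of_le hτt]
    refine setIntegral_nonpos_of_ae_restrict ?_
    filter_upwards [ae_restrict_of_ae_restrict_of_subset (Ioc_subset_Icc_self.trans
      (Icc_subset_Icc hτ0 ht.2)) hneg, ae_restrict_mem measurableSet_Ioc] with s hs hsI
    exact hs (hw_pos s hsI)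
  linarith [show w τ ≤ 0 from hwτ]

theorem mixed_constraint_of_le {a b v : ℝ} (hab : a ≤ b) :
    max (a - b) 0 * (1 - v) + b - a ≥ 0 := by
  rw [max_eq_right (sub_nonpos.2 hab)]
  linarith

theorem eq_zero_of_mixed_constraint {a b v : ℝ} (hv : 0 ≤ v) (hba : b < a)
    (h : max (a - b) 0 * (1 - v) + b - a ≥ 0) : v = 0 := by
  rw [max_eq_left (sub_pos.2 hba).le] at h
  nlinarith

theorem le_of_mixed_constraint {T y₀ : ℝ} {φ v y z : ℝ → ℝ}
    (hy : Continuous y) (hz : Continuous z) (hφ : IntervalIntegrable φ volume 0 T)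
    (hv : Measurable v) (hvI : ∀ t, v t ∈ Icc (0 : ℝ) 1)
    (hyeq : ∀ t ∈ Icc 0 T, y t = y₀ + ∫ s in (0:ℝ)..t, φ s)
    (hzeq : ∀ t ∈ Icc 0 T, z t = y₀ + ∫ s in (0:ℝ)..t, max (φ s) 0 * (1 - v s))
    (hc : ∀ᵐ t ∂(volume.restrict (Icc 0 T)), max (y t - z t) 0 * (1 - v t) + z t - y t ≥ 0) :
    ∀ t ∈ Icc 0 T, z t ≥ y t := by
  intro t ht
  set ψ : ℝ → ℝ := fun s => max (φ s) 0 * (1 - v s)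
  have hψ : IntervalIntegrable ψ volume 0 T :=
    intervalIntegrable_iff.2 <| hφ.def'.pos_part.mul_bdd
      (aestronglyMeasurable_const.sub hv.aestronglyMeasurable) (c := 1) <| ae_of_all _ fun s =>
        abs_le.2 ⟨by linarith [(hvI s).2], by linarith [(hvI s).1]⟩
  have hsub : ∀ c ∈ Icc 0 T, [[0, c]] ⊆ [[0, T]] := fun c hc =>
    uIcc_subset_uIcc left_mem_uIcc (mem_uIcc_of_le hc.1 hc.2)
  have h0T : (0 : ℝ) ∈ Icc 0 T := ⟨le_rfl, ht.1.trans ht.2⟩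
  have hgap0 : y 0 - z 0 = 0 := by
    rw [hyeq 0 h0T, hzeq 0 h0T]
    simp
  have hgap : ∀ c ∈ Icc 0 T, y c - z c = (y 0 - z 0) + ∫ s in (0:ℝ)..c, (φ - ψ) s := by
    intro c hc
    rw [hgap0, hyeq c hc, hzeq c hc, Pi.sub_def,
      intervalIntegral.integral_sub (hφ.mono_set (hsub c hc)) (hψ.mono_set (hsub c hc))]
    ring
  have hgap_nonpos : ∀ᵐ s ∂(volume.restrict (Icc 0 T)), 0 < y s - z s → (φ - ψ) s ≤ 0 := by
    filter_upwards [hc] with s hs hpos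
    have hv0 : v s = 0 := eq_zero_of_mixed_constraint (hvI s).1 (sub_pos.1 hpos) hs
    simp only [Pi.sub_apply, ψ, hv0, sub_zero, mul_one, sub_nonpos, le_max_left]
  exact sub_nonpos.1 <| nonpos_of_eq_add_integral (hy.sub hz).continuousOn hgap0.le
    (hφ.sub hψ) hgap hgap_nonpos t ht

theorem stmt6_general (n p : ℕ) (T : ℝ)
    (U : Set (EuclideanSpace ℝ (Fin p))) (hUcomp : IsCompact U)
    (f : EuclideanSpace ℝ (Fin n) × ℝ × EuclideanSpace ℝ (Fin p) → EuclideanSpace ℝ (Fin n))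
    (g : EuclideanSpace ℝ (Fin n) × ℝ × EuclideanSpace ℝ (Fin p) → ℝ)
    (hg : ContDiff ℝ 1 g)
    (x₀ : EuclideanSpace ℝ (Fin n)) (y₀ : ℝ) :
    sInf {r : ℝ |
      ∃ (u : ℝ → EuclideanSpace ℝ (Fin p)) (v : ℝ → ℝ)
        (x : ℝ → EuclideanSpace ℝ (Fin n)) (y z : ℝ → ℝ),
        Measurable u ∧ (∀ t, u t ∈ U) ∧ Measurable v ∧ (∀ t, v t ∈ Icc (0:ℝ) 1) ∧
        Continuous x ∧ Continuous y ∧ Continuous z ∧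
        x 0 = x₀ ∧ y 0 = y₀ ∧ z 0 = y₀ ∧
        (∀ t ∈ Icc 0 T, x t = x₀ + ∫ s in (0:ℝ)..t, f (x s, y s, u s)) ∧
        (∀ t ∈ Icc 0 T, y t = y₀ + ∫ s in (0:ℝ)..t, g (x s, y s, u s)) ∧
        (∀ t ∈ Icc 0 T, z t = y₀ + ∫ s in (0:ℝ)..t, max (g (x s, y s, u s)) 0 * (1 - v s)) ∧
        (∀ t ∈ Icc 0 T, z t ≥ y t) ∧
        r = z T} =
    sInf {r : ℝ |
      ∃ (u : ℝ → EuclideanSpace ℝ (Fin p)) (v : ℝ → ℝ)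
        (x : ℝ → EuclideanSpace ℝ (Fin n)) (y z : ℝ → ℝ),
        Measurable u ∧ (∀ t, u t ∈ U) ∧ Measurable v ∧ (∀ t, v t ∈ Icc (0:ℝ) 1) ∧
        Continuous x ∧ Continuous y ∧ Continuous z ∧
        x 0 = x₀ ∧ y 0 = y₀ ∧ z 0 = y₀ ∧
        (∀ t ∈ Icc 0 T, x t = x₀ + ∫ s in (0:ℝ)..t, f (x s, y s, u s)) ∧
        (∀ t ∈ Icc 0 T, y t = y₀ + ∫ s in (0:ℝ)..t, g (x s, y s, u s)) ∧
        (∀ t ∈ Icc 0 T, z t = y₀ + ∫ s in (0:ℝ)..t, max (g (x s, y s, u s)) 0 * (1 - v s)) ∧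
        (∀ᵐ t ∂(volume.restrict (Icc 0 T)),
          max (y t - z t) 0 * (1 - v t) + z t - y t ≥ 0) ∧
        r = z T} := by
  congr 1
  ext r
  constructor
  · rintro ⟨u, v, x, y, z, hu, huU, hv, hvI, hx, hy, hz, hx0, hy0, hz0, hxeq, hyeq, hzeq, hC, hr⟩
    exact ⟨u, v, x, y, z, hu, huU, hv, hvI, hx, hy, hz, hx0, hy0, hz0, hxeq, hyeq, hzeq,
      (ae_restrict_mem measurableSet_Icc).mono fun t ht => mixed_constraint_of_le (hC t ht), hr⟩
  · rintro ⟨u, v, x, y, z, hu, huU, hv, hvI, hx, hy, hz, hx0, hy0, hz0, hxeq, hyeq, hzeq, hCm, hr⟩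
    have hg_int : IntervalIntegrable (fun s => g (x s, y s, u s)) volume 0 T :=
      intervalIntegrable_comp_of_mapsTo hg.continuous
        (hx.aestronglyMeasurable.prodMk (hy.aestronglyMeasurable.prodMk hu.aestronglyMeasurable))
        (((isCompact_uIcc (a := 0) (b := T)).image hx).prod
          ((isCompact_uIcc.image hy).prod hUcomp))
        fun s hs => ⟨mem_image_of_mem x (uIoc_subset_uIcc hs),
          mem_image_of_mem y (uIoc_subset_uIcc hs), huU s⟩
    exact ⟨u, v, x, y, z, hu, huU, hv, hvI, hx, hy, hz, hx0, hy0, hz0, hxeq, hyeq, hzeq,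
      le_of_mixed_constraint hy hz hg_int hv hvI hyeq hzeq hCm, hr⟩

/-- Proposition 3 of the paper: for the extended dynamics
`ẋ = f, ẏ = g, ż = max(g,0)(1-v)` with initial condition `(x₀,y₀,y₀)`, the
infimum of `z(T)` under the state constraint `C : z(t) ≥ y(t)` on `[0,T]`
equals the infimum of `z(T)` under the mixed constraint
`C_m : max(y-z,0)(1-v) + z - y ≥ 0` a.e. on `[0,T]`. -/
theorem stmt6 (n p : ℕ) (T : ℝ) (hT : 0 < T)
    (U : Set (EuclideanSpace ℝ (Fin p))) (hUne : U.Nonempty) (hUcomp : IsCompact U)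
    (f : EuclideanSpace ℝ (Fin n) × ℝ × EuclideanSpace ℝ (Fin p) → EuclideanSpace ℝ (Fin n))
    (g : EuclideanSpace ℝ (Fin n) × ℝ × EuclideanSpace ℝ (Fin p) → ℝ)
    (hf : ContDiff ℝ 1 f) (hg : ContDiff ℝ 1 g)
    (C : ℝ) (hC : 0 < C)
    (hgrowth : ∀ x y u, u ∈ U → ‖f (x, y, u)‖ + |g (x, y, u)| ≤ C * (1 + ‖x‖ + |y|))
    (x₀ : EuclideanSpace ℝ (Fin n)) (y₀ : ℝ) :
    sInf {r : ℝ |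
      ∃ (u : ℝ → EuclideanSpace ℝ (Fin p)) (v : ℝ → ℝ)
        (x : ℝ → EuclideanSpace ℝ (Fin n)) (y z : ℝ → ℝ),
        Measurable u ∧ (∀ t, u t ∈ U) ∧ Measurable v ∧ (∀ t, v t ∈ Icc (0:ℝ) 1) ∧
        Continuous x ∧ Continuous y ∧ Continuous z ∧
        x 0 = x₀ ∧ y 0 = y₀ ∧ z 0 = y₀ ∧
        (∀ t ∈ Icc 0 T, x t = x₀ + ∫ s in (0:ℝ)..t, f (x s, y s, u s)) ∧
        (∀ t ∈ Icc 0 T, y t = y₀ + ∫ s in (0:ℝ)..t, g (x s, y s, u s)) ∧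
        (∀ t ∈ Icc 0 T, z t = y₀ + ∫ s in (0:ℝ)..t, max (g (x s, y s, u s)) 0 * (1 - v s)) ∧
        (∀ t ∈ Icc 0 T, z t ≥ y t) ∧
        r = z T} =
    sInf {r : ℝ |
      ∃ (u : ℝ → EuclideanSpace ℝ (Fin p)) (v : ℝ → ℝ)
        (x : ℝ → EuclideanSpace ℝ (Fin n)) (y z : ℝ → ℝ),
        Measurable u ∧ (∀ t, u t ∈ U) ∧ Measurable v ∧ (∀ t, v t ∈ Icc (0:ℝ) 1) ∧
        Continuous x ∧ Continuous y ∧ Continuous z ∧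
        x 0 = x₀ ∧ y 0 = y₀ ∧ z 0 = y₀ ∧
        (∀ t ∈ Icc 0 T, x t = x₀ + ∫ s in (0:ℝ)..t, f (x s, y s, u s)) ∧
        (∀ t ∈ Icc 0 T, y t = y₀ + ∫ s in (0:ℝ)..t, g (x s, y s, u s)) ∧
        (∀ t ∈ Icc 0 T, z t = y₀ + ∫ s in (0:ℝ)..t, max (g (x s, y s, u s)) 0 * (1 - v s)) ∧
        (∀ᵐ t ∂(volume.restrict (Icc 0 T)),
          max (y t - z t) 0 * (1 - v t) + z t - y t ≥ 0) ∧
        r = z T} :=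
  stmt6_general n p T U hUcomp f g hg x₀ y₀
end

section
/- Let T > 0, let U ⊆ ℝᵖ be a nonempty compact set, f : ℝⁿ × ℝ × ℝᵖ → ℝⁿ and g : ℝⁿ × ℝ × ℝᵖ → ℝ be continuously differentiable. Let 0 < θ ≤ θ′. Suppose (x,y,z) : [0,T] → ℝⁿ⁺² is an absolutely continuous solution of ẋ = f(x,y,u(t)), ẏ = g(x,y,u(t)), ż = max(g(x,y,u(t)),0)·(1 − v′(t)·e^{−θ′·max(y−z,0)}) for measurable controls u : [0,T] → U and v′ : [0,T] → [0,1]. Then there exists a measurable control v : [0,T] → [0,1], namely v(t) = v′(t)·e^{−(θ′−θ)·max(y(t)−z(t),0)}, such that (x,y,z) is a solution of ẋ = f(x,y,u(t)), ẏ = g(x,y,u(t)), ż = max(g(x,y,u(t)),0)·(1 − v(t)·e^{−θ·max(y−z,0)}) with controls (u,v). -/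
open MeasureTheory Set

/- Proof idea: the factor `e^{−(θ′−θ)·max(y−z,0)}` lies in `(0,1]`, so `v` is again a `[0,1]`-valued
measurable control, and `e^{−(θ′−θ)m}·e^{−θm} = e^{−θ′m}` makes the two `ż` equations coincide
pointwise. -/

lemma mul_exp_neg_mul_mem_Icc {w c a : ℝ} (hw : w ∈ Icc (0 : ℝ) 1) (hc : 0 ≤ c) (ha : 0 ≤ a) :
    w * Real.exp (-c * a) ∈ Icc (0 : ℝ) 1 := by
  have hexp : Real.exp (-c * a) ≤ 1 := Real.exp_le_one_iff.mpr (by nlinarith)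
  exact ⟨mul_nonneg hw.1 (Real.exp_pos _).le, mul_le_one₀ hw.2 (Real.exp_pos _).le hexp⟩

lemma mul_exp_neg_sub_mul_mul_exp_neg_mul (w θ θ' m : ℝ) :
    w * Real.exp (-(θ' - θ) * m) * Real.exp (-θ * m) = w * Real.exp (-θ' * m) := by
  rw [mul_assoc, ← Real.exp_add]
  ring_nf

theorem stmt8_general (n p : ℕ) (T : ℝ)
    (f : EuclideanSpace ℝ (Fin n) × ℝ × EuclideanSpace ℝ (Fin p) → EuclideanSpace ℝ (Fin n))
    (g : EuclideanSpace ℝ (Fin n) × ℝ × EuclideanSpace ℝ (Fin p) → ℝ)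
    (θ θ' : ℝ) (hθθ' : θ ≤ θ')
    (u : ℝ → EuclideanSpace ℝ (Fin p))
    (v' : ℝ → ℝ) (hv' : Measurable v') (hv'01 : ∀ t, v' t ∈ Icc (0:ℝ) 1)
    (x : ℝ → EuclideanSpace ℝ (Fin n)) (y z : ℝ → ℝ)
    (hy : Continuous y) (hzc : Continuous z)
    (hxeq : ∀ t ∈ Icc 0 T, x t = x 0 + ∫ s in (0:ℝ)..t, f (x s, y s, u s))
    (hyeq : ∀ t ∈ Icc 0 T, y t = y 0 + ∫ s in (0:ℝ)..t, g (x s, y s, u s))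
    (hzeq : ∀ t ∈ Icc 0 T, z t = z 0 + ∫ s in (0:ℝ)..t,
      max (g (x s, y s, u s)) 0 *
        (1 - v' s * Real.exp (-θ' * max (y s - z s) 0))) :
    ∃ v : ℝ → ℝ,
      (∀ t, v t = v' t * Real.exp (-(θ' - θ) * max (y t - z t) 0)) ∧
      Measurable v ∧ (∀ t, v t ∈ Icc (0:ℝ) 1) ∧
      (∀ t ∈ Icc 0 T, x t = x 0 + ∫ s in (0:ℝ)..t, f (x s, y s, u s)) ∧
      (∀ t ∈ Icc 0 T, y t = y 0 + ∫ s in (0:ℝ)..t, g (x s, y s, u s)) ∧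
      (∀ t ∈ Icc 0 T, z t = z 0 + ∫ s in (0:ℝ)..t,
        max (g (x s, y s, u s)) 0 *
          (1 - v s * Real.exp (-θ * max (y s - z s) 0))) := by
  refine ⟨fun t => v' t * Real.exp (-(θ' - θ) * max (y t - z t) 0), fun _ => rfl,
    ?_, fun t => ?_, hxeq, hyeq, fun t ht => ?_⟩
  · fun_prop
  · exact mul_exp_neg_mul_mem_Icc (hv'01 t) (sub_nonneg.mpr hθθ') (le_max_right _ _)
  · simp only [hzeq t ht, mul_exp_neg_sub_mul_mul_exp_neg_mul]

/-- solution-set monotonicity `S_{θ′} ⊆ S_θ` for `0 < θ ≤ θ′`, used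
in the proof of Proposition 5 of the paper: every absolutely continuous
solution `(x,y,z)` of the θ′-regularized dynamics
`ẋ = f, ẏ = g, ż = max(g,0)(1 - v′·e^{−θ′·max(y−z,0)})` with controls `(u,v′)`
is a solution of the θ-regularized dynamics for the measurable control
`v(t) = v′(t)·e^{−(θ′−θ)·max(y(t)−z(t),0)}`, which takes values in `[0,1]`. -/
theorem stmt8 (n p : ℕ) (T : ℝ) (hT : 0 < T)
    (U : Set (EuclideanSpace ℝ (Fin p))) (hUne : U.Nonempty) (hUcomp : IsCompact U)
    (f : EuclideanSpace ℝ (Fin n) × ℝ × EuclideanSpace ℝ (Fin p) → EuclideanSpace ℝ (Fin n))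
    (g : EuclideanSpace ℝ (Fin n) × ℝ × EuclideanSpace ℝ (Fin p) → ℝ)
    (hf : ContDiff ℝ 1 f) (hg : ContDiff ℝ 1 g)
    (θ θ' : ℝ) (hθ : 0 < θ) (hθθ' : θ ≤ θ')
    (u : ℝ → EuclideanSpace ℝ (Fin p)) (hu : Measurable u) (huU : ∀ t, u t ∈ U)
    (v' : ℝ → ℝ) (hv' : Measurable v') (hv'01 : ∀ t, v' t ∈ Icc (0:ℝ) 1)
    (x : ℝ → EuclideanSpace ℝ (Fin n)) (y z : ℝ → ℝ)
    (hx : Continuous x) (hy : Continuous y) (hzc : Continuous z)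
    (hxeq : ∀ t ∈ Icc 0 T, x t = x 0 + ∫ s in (0:ℝ)..t, f (x s, y s, u s))
    (hyeq : ∀ t ∈ Icc 0 T, y t = y 0 + ∫ s in (0:ℝ)..t, g (x s, y s, u s))
    (hzeq : ∀ t ∈ Icc 0 T, z t = z 0 + ∫ s in (0:ℝ)..t,
      max (g (x s, y s, u s)) 0 *
        (1 - v' s * Real.exp (-θ' * max (y s - z s) 0))) :
    ∃ v : ℝ → ℝ,
      (∀ t, v t = v' t * Real.exp (-(θ' - θ) * max (y t - z t) 0)) ∧
      Measurable v ∧ (∀ t, v t ∈ Icc (0:ℝ) 1) ∧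
      (∀ t ∈ Icc 0 T, x t = x 0 + ∫ s in (0:ℝ)..t, f (x s, y s, u s)) ∧
      (∀ t ∈ Icc 0 T, y t = y 0 + ∫ s in (0:ℝ)..t, g (x s, y s, u s)) ∧
      (∀ t ∈ Icc 0 T, z t = z 0 + ∫ s in (0:ℝ)..t,
        max (g (x s, y s, u s)) 0 *
          (1 - v s * Real.exp (-θ * max (y s - z s) 0))) :=
  stmt8_general n p T f g θ θ' hθθ' u v' hv' hv'01 x y z hy hzc hxeq hyeq hzeq
end
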